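/- The Shapley GCM does not satisfy Set Inclusion: there exist a makespan function v satisfying (S1)–(S4), a finite set T, and sets T1 ⊆ T2 of transactions disjoint from T such that gas^S_{T∪T1}(T1) > gas^S_{T∪T2}(T2). In particular, for T = {tx1}, T1 = {tx2, tx3}, T2 = {tx2, tx3, tx4} with tx1 ≃ (1,{k1}), tx2 ≃ (1,{k2}), tx3 ≃ (1,{k2}), tx4 ≃ (1,{k1}) and v the optimal-scheduler makespan on at least 2 threads, gas^S_{T∪T1}(T1) = 10/6 > 36/24 = gas^S_{T∪T2}(T2). -/
import Mathlib


/-- The Shapley GCM. -/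
noncomputable def shapleyGas {Tx : Type} [DecidableEq Tx]
    (v : Finset Tx → ℝ) (T : Finset Tx) (tx : Tx) : ℝ :=
  ∑ S ∈ (T.erase tx).powerset,
    ((S.card.factorial * (T.card - S.card - 1).factorial : ℝ) / (T.card.factorial : ℝ))
      * (v (insert tx S) - v S)

/-- Execution times of `tx1 ≃ (1,{k1})`, `tx2 ≃ (1,{k2})`, `tx3 ≃ (1,{k2})`,
`tx4 ≃ (1,{k1})` (indices `0,1,2,3`). -/
noncomputable def tTx13 : Fin 4 → ℝ := ![1, 1, 1, 1]

/-- Storage key sets (keys `k1 = 0`, `k2 = 1`). -/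
def keysTx13 : Fin 4 → Finset (Fin 2) := ![{0}, {1}, {1}, {0}]

/-- Integer-valued optimal makespan on 2 threads. -/
def vZ (S : Finset (Fin 4)) : ℤ :=
  ((max (S ∩ {0,3}).card (S ∩ {1,2}).card : ℕ) : ℤ)

/-- Integer-valued (scaled) Shapley gas numerator. -/
def gasZ (T : Finset (Fin 4)) (tx : Fin 4) : ℤ :=
  ∑ S ∈ (T.erase tx).powerset,
    ((S.card.factorial * (T.card - S.card - 1).factorial : ℤ))
      * (vZ (insert tx S) - vZ S)

lemma shapley_cast (T : Finset (Fin 4)) (tx : Fin 4) :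
    shapleyGas (fun S => ((vZ S : ℤ) : ℝ)) T tx
      = ((gasZ T tx : ℤ) : ℝ) / (T.card.factorial : ℝ) := by
  unfold shapleyGas gasZ
  rw [Int.cast_sum, Finset.sum_div]
  refine Finset.sum_congr rfl fun S _ => ?_
  push_cast
  ring

lemma tTx13_one (x : Fin 4) : tTx13 x = 1 := by
  fin_cases x <;> norm_num [tTx13]

/-- The Shapley GCM does not satisfy Set Inclusion: there are a
makespan function `v` satisfying (S1)–(S4) (the optimal-scheduler makespan on
at least 2 threads), a set `T = {tx1}`, and sets `T1 = {tx2,tx3} ⊆ T2 =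
{tx2,tx3,tx4}` disjoint from `T` with
`gas^S_{T∪T1}(T1) = 10/6 > 36/24 = gas^S_{T∪T2}(T2)`. -/
theorem shapleyGas_not_set_inclusion :
    ∃ v : Finset (Fin 4) → ℝ,
      -- (S1) monotonicity in T
      (∀ A B : Finset (Fin 4), A ⊆ B → v A ≤ v B) ∧
      -- (S2) monotonicity under bundling
      (∀ (T : Finset (Fin 4)) (a b c : Fin 4), a ∉ T → b ∉ T → c ∉ T → a ≠ b →
        tTx13 c = tTx13 a + tTx13 b → keysTx13 c = keysTx13 a ∪ keysTx13 b →
        v (insert a (insert b T)) ≤ v (insert c T)) ∧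
      -- (S3) monotonicity in t and K
      (∀ (T : Finset (Fin 4)) (a b : Fin 4), a ∉ T → b ∉ T →
        tTx13 a ≤ tTx13 b → keysTx13 a ⊆ keysTx13 b →
        v (insert a T) ≤ v (insert b T)) ∧
      -- (S4) empty set
      v ∅ = 0 ∧
      -- T1 ⊆ T2, both disjoint from T (trivially checkable, stated for clarity)
      ({1, 2} : Finset (Fin 4)) ⊆ ({1, 2, 3} : Finset (Fin 4)) ∧
      Disjoint ({0} : Finset (Fin 4)) ({1, 2, 3} : Finset (Fin 4)) ∧
      -- the total gas values
      (∑ tx ∈ ({1, 2} : Finset (Fin 4)),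
          shapleyGas v (({0} : Finset (Fin 4)) ∪ {1, 2}) tx) = 10 / 6 ∧
      (∑ tx ∈ ({1, 2, 3} : Finset (Fin 4)),
          shapleyGas v (({0} : Finset (Fin 4)) ∪ {1, 2, 3}) tx) = 36 / 24 ∧
      (∑ tx ∈ ({1, 2} : Finset (Fin 4)),
          shapleyGas v (({0} : Finset (Fin 4)) ∪ {1, 2}) tx)
        > (∑ tx ∈ ({1, 2, 3} : Finset (Fin 4)),
            shapleyGas v (({0} : Finset (Fin 4)) ∪ {1, 2, 3}) tx) := by
  have hA : (∑ tx ∈ ({1, 2} : Finset (Fin 4)),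
      shapleyGas (fun S => ((vZ S : ℤ) : ℝ)) (({0} : Finset (Fin 4)) ∪ {1, 2}) tx) = 10 / 6 := by
    rw [show ({1,2} : Finset (Fin 4)) = insert 1 {2} from rfl,
      Finset.sum_insert (by decide), Finset.sum_singleton, shapley_cast, shapley_cast]
    rw [show gasZ ({0} ∪ {1,2}) 1 = 5 from by decide,
      show gasZ ({0} ∪ {1,2}) 2 = 5 from by decide,
      show (({0} : Finset (Fin 4)) ∪ {1,2}).card = 3 from by decide]
    norm_num [Nat.factorial]
  have hB : (∑ tx ∈ ({1, 2, 3} : Finset (Fin 4)),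
      shapleyGas (fun S => ((vZ S : ℤ) : ℝ)) (({0} : Finset (Fin 4)) ∪ {1, 2, 3}) tx)
        = 36 / 24 := by
    rw [show ({1,2,3} : Finset (Fin 4)) = insert 1 (insert 2 {3}) from rfl,
      Finset.sum_insert (by decide), Finset.sum_insert (by decide), Finset.sum_singleton,
      shapley_cast, shapley_cast, shapley_cast]
    rw [show gasZ ({0} ∪ {1,2,3}) 1 = 12 from by decide,
      show gasZ ({0} ∪ {1,2,3}) 2 = 12 from by decide,
      show gasZ ({0} ∪ {1,2,3}) 3 = 12 from by decide,
      show (({0} : Finset (Fin 4)) ∪ {1,2,3}).card = 4 from by decide]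
    norm_num [Nat.factorial]
  refine ⟨fun S => ((vZ S : ℤ) : ℝ), ?_, ?_, ?_, ?_, by decide, by decide, ?_, ?_, ?_⟩
  · -- S1
    intro A B h
    have : vZ A ≤ vZ B := by
      unfold vZ
      exact_mod_cast max_le_max (Finset.card_le_card (Finset.inter_subset_inter_right h))
        (Finset.card_le_card (Finset.inter_subset_inter_right h))
    show ((vZ A : ℤ) : ℝ) ≤ ((vZ B : ℤ) : ℝ)
    exact_mod_cast this
  · -- S2 (vacuous: times are all 1)
    intro T a b c _ _ _ _ ht _
    rw [tTx13_one, tTx13_one, tTx13_one] at ht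
    norm_num at ht
  · -- S3
    intro T a b ha hb _ hk
    have key : (if a ∈ ({0,3} : Finset (Fin 4)) then True else False) ↔
        (if b ∈ ({0,3} : Finset (Fin 4)) then True else False) := by
      fin_cases a <;> fin_cases b <;> simp_all <;> revert hk <;> decide
    have hval : vZ (insert a T) = vZ (insert b T) := by
      unfold vZ
      have h1 : ∀ (x : Fin 4) (X : Finset (Fin 4)), x ∉ T →
          ((insert x T) ∩ X).card = (T ∩ X).card + (if x ∈ X then 1 else 0) := by
        intro x X hx
        by_cases h : x ∈ X
        · rw [Finset.insert_inter_of_mem h,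
            Finset.card_insert_of_notMem (fun hc => hx (Finset.mem_inter.1 hc).1), if_pos h]
        · rw [Finset.insert_inter_of_notMem h, if_neg h, Nat.add_zero]
      have hab03 : (if a ∈ ({0,3} : Finset (Fin 4)) then 1 else 0) =
          (if b ∈ ({0,3} : Finset (Fin 4)) then 1 else 0) := by
        by_cases h : a ∈ ({0,3} : Finset (Fin 4)) <;> by_cases h' : b ∈ ({0,3} : Finset (Fin 4)) <;>
          simp_all
      have hab12 : (if a ∈ ({1,2} : Finset (Fin 4)) then 1 else 0) =
          (if b ∈ ({1,2} : Finset (Fin 4)) then 1 else 0) := by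
        fin_cases a <;> fin_cases b <;> first | rfl | (revert hk; decide)
      rw [h1 a _ ha, h1 a _ ha, h1 b _ hb, h1 b _ hb, hab03, hab12]
    show ((vZ (insert a T) : ℤ) : ℝ) ≤ ((vZ (insert b T) : ℤ) : ℝ)
    exact_mod_cast hval.le
  · -- S4
    norm_num [vZ]
  · exact hA
  · exact hB
  · rw [hA, hB]; norm_num
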